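/- arXiv:0804.2120 — 2 statements merged into one kernel-verified Lean document; each statement's English description precedes it below -/
import Mathlib

section
/- As Im λ → +∞ (uniformly in Re λ), C₁₂(λ) → −(β+1)/2; consequently β = −2·lim_{Im λ→+∞} C₁₂(λ) − 1. -/
open Complex MeasureTheory Filter Topology

noncomputable def qfun (q : ℕ → ℂ) (x : ℝ) : ℂ :=
  ∑' n : ℕ, q (n + 1) * Complex.exp (Complex.I * ((n : ℂ) + 1) * (x : ℂ))

noncomputable def f1 (V : ℕ → ℕ → ℂ) (lam : ℂ) (x : ℂ) : ℂ :=
  Complex.exp (Complex.I * lam * x) *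
    (1 + ∑' n : ℕ, (((n : ℂ) + 1) + 2 * lam)⁻¹ *
      ∑' k : ℕ, V (n + 1) (n + 1 + k) *
        Complex.exp (Complex.I * ((n : ℂ) + 1 + (k : ℂ)) * x))

noncomputable def f2 (V : ℕ → ℕ → ℂ) (β : ℝ) (lam : ℂ) (x : ℂ) : ℂ :=
  Complex.exp (-Complex.I * lam * (β : ℂ) * x) *
    (1 + ∑' n : ℕ, (((n : ℂ) + 1) - 2 * lam * (β : ℂ))⁻¹ *
      ∑' k : ℕ, V (n + 1) (n + 1 + k) *
        Complex.exp (Complex.I * ((n : ℂ) + 1 + (k : ℂ)) * x))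

noncomputable def C12 (V : ℕ → ℕ → ℂ) (β : ℝ) (lam : ℂ) : ℂ :=
  (f1 V lam 0 * deriv (fun t : ℝ => f2 V β lam (t : ℂ)) 0
    - deriv (fun t : ℝ => f1 V lam (t : ℂ)) 0 * f2 V β lam 0) / (2 * Complex.I * lam)

noncomputable def rho (β : ℝ) (x : ℝ) : ℝ := if 0 ≤ x then 1 else β ^ 2

/-- The recurrence relations (6)–(7) linking the coefficients `V` to the Fourier
coefficients `q` of the potential. -/
def Recur (q : ℕ → ℂ) (V : ℕ → ℕ → ℂ) : Prop :=
  (∀ n α : ℕ, 1 ≤ n → n < α →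
      (α : ℂ) * ((α : ℂ) - (n : ℂ)) * V n α
        + ∑ s ∈ Finset.Icc n (α - 1), q (α - s) * V n s = 0) ∧
  (∀ α : ℕ, 1 ≤ α → (α : ℂ) * ∑ n ∈ Finset.Icc 1 α, V n α + q α = 0)

/-- Convergence of the series `∑_{n≥1} (1/n) ∑_{α≥n} α |V_{nα}|` (inner sums indexed
by `α = n + k`). -/
def Conv (V : ℕ → ℕ → ℂ) : Prop :=
  (∀ n : ℕ, 1 ≤ n → Summable fun k : ℕ => ((n + k : ℕ) : ℝ) * ‖V n (n + k)‖) ∧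
  Summable (fun n : ℕ =>
    ((n : ℝ) + 1)⁻¹ * ∑' k : ℕ, ((n + 1 + k : ℕ) : ℝ) * ‖V (n + 1) (n + 1 + k)‖)

namespace St13

noncomputable def bb (V : ℕ → ℕ → ℂ) (n : ℕ) : ℝ :=
  ∑' k : ℕ, ((n + 1 + k : ℕ) : ℝ) * ‖V (n + 1) (n + 1 + k)‖

noncomputable def aco (V : ℕ → ℕ → ℂ) (n : ℕ) : ℂ := ∑' k : ℕ, V (n + 1) (n + 1 + k)

noncomputable def dco (V : ℕ → ℕ → ℂ) (n : ℕ) : ℂ :=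
  ∑' k : ℕ, V (n + 1) (n + 1 + k) * (Complex.I * ((n : ℂ) + 1 + (k : ℂ)))

variable {V : ℕ → ℕ → ℂ}

lemma sum_b (hC : Conv V) (n : ℕ) :
    Summable fun k : ℕ => ((n + 1 + k : ℕ) : ℝ) * ‖V (n + 1) (n + 1 + k)‖ :=
  hC.1 (n + 1) (Nat.le_add_left 1 n)

lemma bb_nonneg (V : ℕ → ℕ → ℂ) (n : ℕ) : 0 ≤ bb V n :=
  tsum_nonneg fun k => by positivity

lemma norm_le_term (V : ℕ → ℕ → ℂ) (n k : ℕ) :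
    ‖V (n + 1) (n + 1 + k)‖ ≤ ((n + 1 + k : ℕ) : ℝ) * ‖V (n + 1) (n + 1 + k)‖ := by
  have h1 : (1 : ℝ) ≤ ((n + 1 + k : ℕ) : ℝ) := by
    have : 1 ≤ n + 1 + k := by omega
    exact_mod_cast this
  nlinarith [norm_nonneg (V (n + 1) (n + 1 + k))]

lemma sum_V (hC : Conv V) (n : ℕ) : Summable fun k : ℕ => ‖V (n + 1) (n + 1 + k)‖ :=
  (sum_b hC n).of_nonneg_of_le (fun k => norm_nonneg _) (fun k => norm_le_term V n k)

lemma norm_aco (hC : Conv V) (n : ℕ) : ‖aco V n‖ ≤ ((n : ℝ) + 1)⁻¹ * bb V n := by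
  have h1 : ‖aco V n‖ ≤ ∑' k : ℕ, ‖V (n + 1) (n + 1 + k)‖ :=
    norm_tsum_le_tsum_norm (sum_V hC n)
  have h2 : ∑' k : ℕ, ‖V (n + 1) (n + 1 + k)‖
      ≤ ∑' k : ℕ, ((n : ℝ) + 1)⁻¹ * (((n + 1 + k : ℕ) : ℝ) * ‖V (n + 1) (n + 1 + k)‖) := by
    refine Summable.tsum_le_tsum (fun k => ?_) (sum_V hC n) ((sum_b hC n).mul_left _)
    have hm : ((n : ℝ) + 1) ≤ ((n + 1 + k : ℕ) : ℝ) := by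
      push_cast; linarith [Nat.cast_nonneg (α := ℝ) k]
    have hn : (0 : ℝ) < (n : ℝ) + 1 := by positivity
    rw [← mul_assoc]
    have h3 : (1 : ℝ) ≤ ((n : ℝ) + 1)⁻¹ * ((n + 1 + k : ℕ) : ℝ) := by
      rw [← div_eq_inv_mul]
      exact (one_le_div hn).mpr hm
    nlinarith [norm_nonneg (V (n + 1) (n + 1 + k))]
  rw [bb, ← tsum_mul_left] at *
  linarith

lemma norm_dco_term (V : ℕ → ℕ → ℂ) (n k : ℕ) :
    ‖V (n + 1) (n + 1 + k) * (Complex.I * ((n : ℂ) + 1 + (k : ℂ)))‖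
      = ((n + 1 + k : ℕ) : ℝ) * ‖V (n + 1) (n + 1 + k)‖ := by
  have hcast : ((n : ℂ) + 1 + (k : ℂ)) = ((n + 1 + k : ℕ) : ℂ) := by push_cast; ring
  rw [hcast, norm_mul, norm_mul, Complex.norm_I, one_mul, Complex.norm_natCast]
  ring

lemma sum_dco (hC : Conv V) (n : ℕ) :
    Summable fun k : ℕ => V (n + 1) (n + 1 + k) * (Complex.I * ((n : ℂ) + 1 + (k : ℂ))) := by
  refine Summable.of_norm ?_
  simpa only [norm_dco_term] using sum_b hC n

lemma norm_dco (hC : Conv V) (n : ℕ) : ‖dco V n‖ ≤ bb V n := by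
  have := norm_tsum_le_tsum_norm (f := fun k : ℕ =>
    V (n + 1) (n + 1 + k) * (Complex.I * ((n : ℂ) + 1 + (k : ℂ)))) (by
      simpa only [norm_dco_term] using sum_b hC n)
  simp only [norm_dco_term] at this
  exact this

lemma norm_nat_add_one (n : ℕ) : ‖((n : ℂ) + 1)‖ = (n : ℝ) + 1 := by
  rw [show ((n : ℂ) + 1) = ((n + 1 : ℕ) : ℂ) by push_cast; ring, Complex.norm_natCast]
  push_cast; ring

lemma norm_z1_ge {lam : ℂ} (n : ℕ) : 2 * lam.im ≤ ‖((n : ℂ) + 1) + 2 * lam‖ := by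
  have h := Complex.abs_im_le_norm (((n : ℂ) + 1) + 2 * lam)
  have him : (((n : ℂ) + 1) + 2 * lam).im = 2 * lam.im := by simp
  rw [him] at h
  exact le_trans (le_abs_self _) h

lemma norm_z2_ge {lam : ℂ} {β : ℝ} (hβ : 0 < β) (hl : 0 < lam.im) (n : ℕ) :
    2 * β * lam.im ≤ ‖((n : ℂ) + 1) - 2 * lam * (β : ℂ)‖ := by
  have h := Complex.abs_im_le_norm (((n : ℂ) + 1) - 2 * lam * (β : ℂ))
  have him : (((n : ℂ) + 1) - 2 * lam * (β : ℂ)).im = -(2 * lam.im * β) := by simp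
  rw [him] at h
  have := neg_abs_le (-(2 * lam.im * β))
  calc 2 * β * lam.im = -(-(2 * lam.im * β)) := by ring
  _ ≤ |(-(2 * lam.im * β))| := neg_le_abs _
  _ ≤ _ := h

lemma tri_z1 {lam : ℂ} (n : ℕ) :
    ((n : ℝ) + 1) ≤ ‖((n : ℂ) + 1) + 2 * lam‖ + 2 * ‖lam‖ := by
  have h : ((n : ℂ) + 1) = (((n : ℂ) + 1) + 2 * lam) - 2 * lam := by ring
  calc ((n : ℝ) + 1) = ‖((n : ℂ) + 1)‖ := (norm_nat_add_one n).symm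
  _ = ‖(((n : ℂ) + 1) + 2 * lam) - 2 * lam‖ := by rw [← h]
  _ ≤ ‖((n : ℂ) + 1) + 2 * lam‖ + ‖(2 : ℂ) * lam‖ := norm_sub_le _ _
  _ = ‖((n : ℂ) + 1) + 2 * lam‖ + 2 * ‖lam‖ := by rw [norm_mul]; norm_num

lemma tri_z2 {lam : ℂ} {β : ℝ} (hβ : 0 < β) (n : ℕ) :
    ((n : ℝ) + 1) ≤ ‖((n : ℂ) + 1) - 2 * lam * (β : ℂ)‖ + 2 * β * ‖lam‖ := by
  have h : ((n : ℂ) + 1) = (((n : ℂ) + 1) - 2 * lam * (β : ℂ)) + 2 * lam * (β : ℂ) := by ring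
  calc ((n : ℝ) + 1) = ‖((n : ℂ) + 1)‖ := (norm_nat_add_one n).symm
  _ = ‖(((n : ℂ) + 1) - 2 * lam * (β : ℂ)) + 2 * lam * (β : ℂ)‖ := by rw [← h]
  _ ≤ ‖((n : ℂ) + 1) - 2 * lam * (β : ℂ)‖ + ‖(2 : ℂ) * lam * (β : ℂ)‖ := norm_add_le _ _
  _ = ‖((n : ℂ) + 1) - 2 * lam * (β : ℂ)‖ + 2 * β * ‖lam‖ := by
      rw [norm_mul, norm_mul, Complex.norm_real, Real.norm_eq_abs, abs_of_pos hβ]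
      norm_num; ring

lemma inv_norm_le_of {z : ℂ} {n : ℕ} {K : ℝ} (hz : 0 < ‖z‖) (h : ((n : ℝ) + 1) ≤ K * ‖z‖) :
    ‖z⁻¹‖ ≤ K * ((n : ℝ) + 1)⁻¹ := by
  rw [norm_inv]
  have h2 : 1 / ‖z‖ ≤ K / ((n : ℝ) + 1) := by
    rw [div_le_div_iff₀ hz (by positivity)]
    nlinarith
  simpa [one_div, div_eq_mul_inv] using h2

lemma norm_z1_pos {lam : ℂ} (hl : 0 < lam.im) (n : ℕ) :
    0 < ‖((n : ℂ) + 1) + 2 * lam‖ := lt_of_lt_of_le (by linarith) (norm_z1_ge n)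

lemma norm_z2_pos {lam : ℂ} {β : ℝ} (hβ : 0 < β) (hl : 0 < lam.im) (n : ℕ) :
    0 < ‖((n : ℂ) + 1) - 2 * lam * (β : ℂ)‖ :=
  lt_of_lt_of_le (by positivity) (norm_z2_ge hβ hl n)

lemma c1_simple {lam : ℂ} (hl : 0 < lam.im) (n : ℕ) :
    ‖((((n : ℂ) + 1) + 2 * lam))⁻¹‖ ≤ lam.im⁻¹ := by
  rw [norm_inv]
  have h := norm_z1_ge (lam := lam) n
  exact inv_anti₀ hl (by linarith)

lemma c2_simple {lam : ℂ} {β : ℝ} (hβ : 0 < β) (hl : 0 < lam.im) (n : ℕ) :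
    ‖((((n : ℂ) + 1) - 2 * lam * (β : ℂ)))⁻¹‖ ≤ β⁻¹ * lam.im⁻¹ := by
  rw [norm_inv, ← mul_inv]
  have h := norm_z2_ge hβ hl n
  exact inv_anti₀ (by positivity) (by nlinarith)

lemma c1_K {lam : ℂ} (hl : 0 < lam.im) (n : ℕ) :
    ‖((((n : ℂ) + 1) + 2 * lam))⁻¹‖
      ≤ ((2 * lam.im + 2 * ‖lam‖) / lam.im) * ((n : ℝ) + 1)⁻¹ := by
  refine inv_norm_le_of (norm_z1_pos hl n) ?_
  rw [div_mul_eq_mul_div, le_div_iff₀ hl]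
  have hA := norm_z1_ge (lam := lam) n
  have hB := tri_z1 (lam := lam) n
  nlinarith [norm_nonneg lam, norm_z1_pos hl n, mul_le_mul_of_nonneg_left hB hl.le,
    mul_le_mul_of_nonneg_left hA (norm_nonneg lam), Nat.cast_nonneg (α := ℝ) n]

lemma c2_K {lam : ℂ} {β : ℝ} (hβ : 0 < β) (hl : 0 < lam.im) (n : ℕ) :
    ‖((((n : ℂ) + 1) - 2 * lam * (β : ℂ)))⁻¹‖
      ≤ ((2 * lam.im + 2 * ‖lam‖) / lam.im) * ((n : ℝ) + 1)⁻¹ := by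
  refine inv_norm_le_of (norm_z2_pos hβ hl n) ?_
  rw [div_mul_eq_mul_div, le_div_iff₀ hl]
  have hA := norm_z2_ge hβ hl n
  have hB := tri_z2 (lam := lam) hβ n
  nlinarith [norm_nonneg lam, norm_z2_pos hβ hl n, mul_le_mul_of_nonneg_left hB hl.le,
    mul_le_mul_of_nonneg_left hA (norm_nonneg lam), Nat.cast_nonneg (α := ℝ) n]

lemma norm_2Ilam {lam : ℂ} : ‖(2 : ℂ) * Complex.I * lam‖ = 2 * ‖lam‖ := by
  rw [norm_mul, norm_mul, Complex.norm_I]; norm_num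

lemma prod1 {lam : ℂ} (hl : 0 < lam.im) (n : ℕ) :
    ‖((((n : ℂ) + 1) + 2 * lam))⁻¹‖ * ‖((2 : ℂ) * Complex.I * lam)⁻¹‖
      ≤ ((n : ℝ) + 1)⁻¹ * lam.im⁻¹ := by
  rw [norm_inv, norm_inv, norm_2Ilam, ← mul_inv, ← mul_inv]
  have hA := norm_z1_ge (lam := lam) n
  have hu : 2 * lam.im ≤ 2 * ‖lam‖ := by
    have := Complex.abs_im_le_norm lam
    nlinarith [le_abs_self lam.im]
  have hB := tri_z1 (lam := lam) n
  refine inv_anti₀ (by positivity) ?_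
  nlinarith [mul_le_mul (show lam.im ≤ ‖((n : ℂ) + 1) + 2 * lam‖ - lam.im by linarith)
    (show lam.im ≤ 2 * ‖lam‖ - lam.im by linarith) hl.le
    (show (0 : ℝ) ≤ ‖((n : ℂ) + 1) + 2 * lam‖ - lam.im by linarith)]

lemma prod2 {lam : ℂ} {β : ℝ} (hβ : 0 < β) (hl : 0 < lam.im) (n : ℕ) :
    ‖((((n : ℂ) + 1) - 2 * lam * (β : ℂ)))⁻¹‖ * ‖((2 : ℂ) * Complex.I * lam)⁻¹‖
      ≤ ((n : ℝ) + 1)⁻¹ * lam.im⁻¹ := by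
  rw [norm_inv, norm_inv, norm_2Ilam, ← mul_inv, ← mul_inv]
  have hA := norm_z2_ge hβ hl n
  have hu : 2 * lam.im ≤ 2 * ‖lam‖ := by
    have := Complex.abs_im_le_norm lam
    nlinarith [le_abs_self lam.im]
  have hB := tri_z2 (lam := lam) hβ n
  refine inv_anti₀ (by positivity) ?_
  nlinarith [mul_le_mul
    (show β * lam.im ≤ ‖((n : ℂ) + 1) - 2 * lam * (β : ℂ)‖ - β * lam.im by nlinarith)
    (show lam.im ≤ 2 * ‖lam‖ - lam.im by linarith) hl.le
    (show (0 : ℝ) ≤ ‖((n : ℂ) + 1) - 2 * lam * (β : ℂ)‖ - β * lam.im by nlinarith),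
    mul_pos hβ hl]

lemma norm_exp_I_mul (n k : ℕ) (y : ℝ) :
    ‖Complex.exp (Complex.I * ((n : ℂ) + 1 + (k : ℂ)) * (y : ℂ))‖ = 1 := by
  rw [show Complex.I * ((n : ℂ) + 1 + (k : ℂ)) * (y : ℂ)
      = (((((n + 1 + k : ℕ) : ℝ)) * y : ℝ) : ℂ) * Complex.I by push_cast; ring]
  exact Complex.norm_exp_ofReal_mul_I _

lemma norm_I_mul_mu (n k : ℕ) :
    ‖Complex.I * ((n : ℂ) + 1 + (k : ℂ))‖ = ((n + 1 + k : ℕ) : ℝ) := by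
  rw [show ((n : ℂ) + 1 + (k : ℂ)) = ((n + 1 + k : ℕ) : ℂ) by push_cast; ring,
    norm_mul, Complex.norm_I, one_mul, Complex.norm_natCast]

lemma summable_cb (hC : Conv V) (c : ℕ → ℂ) (K : ℝ)
    (hc : ∀ n, ‖c n‖ ≤ K * ((n : ℝ) + 1)⁻¹) :
    Summable fun n => ‖c n‖ * bb V n := by
  refine Summable.of_nonneg_of_le (fun n => mul_nonneg (norm_nonneg _) (bb_nonneg V n)) (fun n => ?_) (hC.2.mul_left K)
  have h := mul_le_mul_of_nonneg_right (hc n) (bb_nonneg V n)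
  calc ‖c n‖ * bb V n ≤ K * ((n : ℝ) + 1)⁻¹ * bb V n := h
  _ = K * (((n : ℝ) + 1)⁻¹ * ∑' k : ℕ, ((n + 1 + k : ℕ) : ℝ) * ‖V (n + 1) (n + 1 + k)‖) := by
      rw [bb]; ring

lemma hasDerivAt_inner (hC : Conv V) (n : ℕ) (t : ℝ) :
    HasDerivAt (fun s : ℝ => ∑' k : ℕ, V (n + 1) (n + 1 + k) *
        Complex.exp (Complex.I * ((n : ℂ) + 1 + (k : ℂ)) * (s : ℂ)))
      (∑' k : ℕ, V (n + 1) (n + 1 + k) *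
        (Complex.exp (Complex.I * ((n : ℂ) + 1 + (k : ℂ)) * (t : ℂ)) *
          (Complex.I * ((n : ℂ) + 1 + (k : ℂ))))) t := by
  refine hasDerivAt_tsum (u := fun k => ((n + 1 + k : ℕ) : ℝ) * ‖V (n + 1) (n + 1 + k)‖)
    (g' := fun k (y : ℝ) => V (n + 1) (n + 1 + k) *
      (Complex.exp (Complex.I * ((n : ℂ) + 1 + (k : ℂ)) * (y : ℂ)) *
        (Complex.I * ((n : ℂ) + 1 + (k : ℂ)))))
    (sum_b hC n) (fun k y => ?_) (fun k y => ?_) (y₀ := t) ?_ t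
  · have h0 : HasDerivAt (fun z : ℂ => Complex.I * ((n : ℂ) + 1 + (k : ℂ)) * z)
        (Complex.I * ((n : ℂ) + 1 + (k : ℂ))) ((y : ℝ) : ℂ) := by
      simpa using (hasDerivAt_id ((y : ℝ) : ℂ)).const_mul (Complex.I * ((n : ℂ) + 1 + (k : ℂ)))
    exact (h0.cexp.comp_ofReal).const_mul _
  · rw [norm_mul, norm_mul, norm_exp_I_mul, norm_I_mul_mu, one_mul]
    exact le_of_eq (mul_comm _ _)
  · refine Summable.of_norm_bounded (sum_b hC n) (fun k => ?_)
    rw [norm_mul, norm_exp_I_mul, mul_one]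
    exact norm_le_term V n k


lemma hasDerivAt_T (hC : Conv V) (c : ℕ → ℂ) (K : ℝ)
    (hc : ∀ n, ‖c n‖ ≤ K * ((n : ℝ) + 1)⁻¹) (t : ℝ) :
    HasDerivAt (fun s : ℝ => ∑' n : ℕ, c n * ∑' k : ℕ, V (n + 1) (n + 1 + k) *
        Complex.exp (Complex.I * ((n : ℂ) + 1 + (k : ℂ)) * (s : ℂ)))
      (∑' n : ℕ, c n * ∑' k : ℕ, V (n + 1) (n + 1 + k) *
        (Complex.exp (Complex.I * ((n : ℂ) + 1 + (k : ℂ)) * (t : ℂ)) *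
          (Complex.I * ((n : ℂ) + 1 + (k : ℂ))))) t := by
  refine hasDerivAt_tsum (u := fun n => ‖c n‖ * bb V n)
    (g' := fun n (y : ℝ) => c n * ∑' k : ℕ, V (n + 1) (n + 1 + k) *
      (Complex.exp (Complex.I * ((n : ℂ) + 1 + (k : ℂ)) * (y : ℂ)) *
        (Complex.I * ((n : ℂ) + 1 + (k : ℂ)))))
    (summable_cb hC c K hc) (fun n y => (hasDerivAt_inner hC n y).const_mul (c n))
    (fun n y => ?_) (y₀ := t) ?_ t
  · rw [norm_mul]
    refine mul_le_mul_of_nonneg_left ?_ (norm_nonneg (c n))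
    refine tsum_of_norm_bounded (sum_b hC n).hasSum (fun k => ?_)
    rw [norm_mul, norm_mul, norm_exp_I_mul, norm_I_mul_mu, one_mul]
    exact le_of_eq (mul_comm _ _)
  · refine Summable.of_norm_bounded (summable_cb hC c K hc) (fun n => ?_)
    rw [norm_mul]
    refine mul_le_mul_of_nonneg_left ?_ (norm_nonneg (c n))
    refine tsum_of_norm_bounded (sum_b hC n).hasSum (fun k => ?_)
    rw [norm_mul, norm_exp_I_mul, mul_one]
    exact norm_le_term V n k

lemma hasDerivAt_exp1 (lam : ℂ) :
    HasDerivAt (fun t : ℝ => Complex.exp (Complex.I * lam * (t : ℂ))) (Complex.I * lam) 0 := by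
  have h0 : HasDerivAt (fun z : ℂ => Complex.I * lam * z) (Complex.I * lam) (((0 : ℝ)) : ℂ) := by
    simpa using (hasDerivAt_id (((0 : ℝ)) : ℂ)).const_mul (Complex.I * lam)
  have h := h0.cexp.comp_ofReal
  simpa using h

lemma hasDerivAt_exp2 (lam : ℂ) (β : ℝ) :
    HasDerivAt (fun t : ℝ => Complex.exp (-Complex.I * lam * (β : ℂ) * (t : ℂ)))
      (-Complex.I * lam * (β : ℂ)) 0 := by
  have h0 : HasDerivAt (fun z : ℂ => -Complex.I * lam * (β : ℂ) * z)
      (-Complex.I * lam * (β : ℂ)) (((0 : ℝ)) : ℂ) := by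
    simpa using (hasDerivAt_id (((0 : ℝ)) : ℂ)).const_mul (-Complex.I * lam * (β : ℂ))
  have h := h0.cexp.comp_ofReal
  simpa using h

noncomputable def FF1 (V : ℕ → ℕ → ℂ) (lam : ℂ) : ℂ :=
  1 + ∑' n : ℕ, (((n : ℂ) + 1) + 2 * lam)⁻¹ * aco V n

noncomputable def FF2 (V : ℕ → ℕ → ℂ) (β : ℝ) (lam : ℂ) : ℂ :=
  1 + ∑' n : ℕ, (((n : ℂ) + 1) - 2 * lam * (β : ℂ))⁻¹ * aco V n

noncomputable def DD1 (V : ℕ → ℕ → ℂ) (lam : ℂ) : ℂ :=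
  ∑' n : ℕ, (((n : ℂ) + 1) + 2 * lam)⁻¹ * dco V n

noncomputable def DD2 (V : ℕ → ℕ → ℂ) (β : ℝ) (lam : ℂ) : ℂ :=
  ∑' n : ℕ, (((n : ℂ) + 1) - 2 * lam * (β : ℂ))⁻¹ * dco V n

lemma f1_val (lam : ℂ) : f1 V lam 0 = FF1 V lam := by
  simp only [f1, FF1, aco, mul_zero, Complex.exp_zero, mul_one, one_mul]

lemma f2_val (β : ℝ) (lam : ℂ) : f2 V β lam 0 = FF2 V β lam := by
  simp only [f2, FF2, aco, mul_zero, Complex.exp_zero, mul_one, one_mul]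

lemma f1_hasDeriv (hC : Conv V) {lam : ℂ} (hl : 0 < lam.im) :
    HasDerivAt (fun t : ℝ => f1 V lam (t : ℂ))
      (Complex.I * lam * FF1 V lam + DD1 V lam) 0 := by
  have hT := hasDerivAt_T hC (fun n => (((n : ℂ) + 1) + 2 * lam)⁻¹)
    ((2 * lam.im + 2 * ‖lam‖) / lam.im) (fun n => c1_K hl n) 0
  have h2 := (hasDerivAt_exp1 lam).mul (hT.const_add 1)
  have h3 : (fun t : ℝ => f1 V lam (t : ℂ))
      = fun t : ℝ => Complex.exp (Complex.I * lam * (t : ℂ)) *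
        (1 + ∑' n : ℕ, (((n : ℂ) + 1) + 2 * lam)⁻¹ * ∑' k : ℕ, V (n + 1) (n + 1 + k) *
          Complex.exp (Complex.I * ((n : ℂ) + 1 + (k : ℂ)) * ((t : ℝ) : ℂ))) := rfl
  rw [h3]
  refine h2.congr_deriv ?_
  simp only [FF1, DD1, aco, dco, Complex.ofReal_zero, mul_zero, Complex.exp_zero,
    mul_one, one_mul]

lemma f2_hasDeriv (hC : Conv V) {β : ℝ} (hβ : 0 < β) {lam : ℂ} (hl : 0 < lam.im) :
    HasDerivAt (fun t : ℝ => f2 V β lam (t : ℂ))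
      (-Complex.I * lam * (β : ℂ) * FF2 V β lam + DD2 V β lam) 0 := by
  have hT := hasDerivAt_T hC (fun n => (((n : ℂ) + 1) - 2 * lam * (β : ℂ))⁻¹)
    ((2 * lam.im + 2 * ‖lam‖) / lam.im) (fun n => c2_K hβ hl n) 0
  have h2 := (hasDerivAt_exp2 lam β).mul (hT.const_add 1)
  have h3 : (fun t : ℝ => f2 V β lam (t : ℂ))
      = fun t : ℝ => Complex.exp (-Complex.I * lam * (β : ℂ) * (t : ℂ)) *
        (1 + ∑' n : ℕ, (((n : ℂ) + 1) - 2 * lam * (β : ℂ))⁻¹ * ∑' k : ℕ, V (n + 1) (n + 1 + k) *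
          Complex.exp (Complex.I * ((n : ℂ) + 1 + (k : ℂ)) * ((t : ℝ) : ℂ))) := rfl
  rw [h3]
  refine h2.congr_deriv ?_
  simp only [FF2, DD2, aco, dco, Complex.ofReal_zero, mul_zero, Complex.exp_zero,
    mul_one, one_mul]

lemma C12_eq (hC : Conv V) {β : ℝ} (hβ : 0 < β) {lam : ℂ} (hl : 0 < lam.im) :
    C12 V β lam = -(((β : ℂ) + 1) / 2) * (FF1 V lam * FF2 V β lam)
      + FF1 V lam * (DD2 V β lam * (2 * Complex.I * lam)⁻¹)
      - (DD1 V lam * (2 * Complex.I * lam)⁻¹) * FF2 V β lam := by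
  have hlam : lam ≠ 0 := by
    intro h; rw [h] at hl; simp at hl
  have hD : (2 * Complex.I * lam) ≠ 0 :=
    mul_ne_zero (mul_ne_zero two_ne_zero Complex.I_ne_zero) hlam
  have hg := mul_inv_cancel₀ hD
  rw [C12, (f1_hasDeriv hC hl).deriv, (f2_hasDeriv hC hβ hl).deriv, f1_val, f2_val,
    div_eq_mul_inv]
  linear_combination (-(((β : ℂ) + 1) * FF1 V lam * FF2 V β lam) / 2) * hg

lemma tendsto_inv_im : Tendsto (fun lam : ℂ => lam.im⁻¹) (comap Complex.im atTop) (𝓝 0) :=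
  tendsto_inv_atTop_zero.comp tendsto_comap

lemma ev_pos : ∀ᶠ lam : ℂ in comap Complex.im atTop, 0 < lam.im :=
  tendsto_comap.eventually (eventually_gt_atTop 0)

lemma FF1_tendsto (hC : Conv V) :
    Tendsto (FF1 V) (comap Complex.im atTop) (𝓝 1) := by
  rw [tendsto_iff_norm_sub_tendsto_zero]
  have hb : ∀ᶠ lam : ℂ in comap Complex.im atTop,
      ‖FF1 V lam - 1‖ ≤ lam.im⁻¹ * (∑' n : ℕ,
        ((n : ℝ) + 1)⁻¹ * ∑' k : ℕ, ((n + 1 + k : ℕ) : ℝ) * ‖V (n + 1) (n + 1 + k)‖) := by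
    filter_upwards [ev_pos] with lam hl
    have h1 : FF1 V lam - 1 = ∑' n : ℕ, (((n : ℂ) + 1) + 2 * lam)⁻¹ * aco V n := by
      rw [FF1]; ring
    rw [h1]
    refine tsum_of_norm_bounded (hC.2.hasSum.mul_left lam.im⁻¹) (fun n => ?_)
    rw [norm_mul]
    exact mul_le_mul (c1_simple hl n) (norm_aco hC n) (norm_nonneg _)
      (inv_nonneg.mpr hl.le)
  have h0 : Tendsto (fun lam : ℂ => lam.im⁻¹ * (∑' n : ℕ,
      ((n : ℝ) + 1)⁻¹ * ∑' k : ℕ, ((n + 1 + k : ℕ) : ℝ) * ‖V (n + 1) (n + 1 + k)‖))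
      (comap Complex.im atTop) (𝓝 0) := by
    simpa using tendsto_inv_im.mul_const (∑' n : ℕ,
      ((n : ℝ) + 1)⁻¹ * ∑' k : ℕ, ((n + 1 + k : ℕ) : ℝ) * ‖V (n + 1) (n + 1 + k)‖)
  exact squeeze_zero' (Eventually.of_forall fun _ => norm_nonneg _) hb h0

lemma FF2_tendsto (hC : Conv V) {β : ℝ} (hβ : 0 < β) :
    Tendsto (FF2 V β) (comap Complex.im atTop) (𝓝 1) := by
  rw [tendsto_iff_norm_sub_tendsto_zero]
  have hb : ∀ᶠ lam : ℂ in comap Complex.im atTop,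
      ‖FF2 V β lam - 1‖ ≤ lam.im⁻¹ * (β⁻¹ * ∑' n : ℕ,
        ((n : ℝ) + 1)⁻¹ * ∑' k : ℕ, ((n + 1 + k : ℕ) : ℝ) * ‖V (n + 1) (n + 1 + k)‖) := by
    filter_upwards [ev_pos] with lam hl
    have h1 : FF2 V β lam - 1
        = ∑' n : ℕ, (((n : ℂ) + 1) - 2 * lam * (β : ℂ))⁻¹ * aco V n := by
      rw [FF2]; ring
    rw [h1]
    refine tsum_of_norm_bounded ((hC.2.hasSum.mul_left β⁻¹).mul_left lam.im⁻¹) (fun n => ?_)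
    rw [norm_mul]
    calc ‖(((n : ℂ) + 1) - 2 * lam * (β : ℂ))⁻¹‖ * ‖aco V n‖
        ≤ (β⁻¹ * lam.im⁻¹) * (((n : ℝ) + 1)⁻¹
          * ∑' k : ℕ, ((n + 1 + k : ℕ) : ℝ) * ‖V (n + 1) (n + 1 + k)‖) :=
          mul_le_mul (c2_simple hβ hl n) (norm_aco hC n) (norm_nonneg _) (by positivity)
    _ = lam.im⁻¹ * (β⁻¹ * (((n : ℝ) + 1)⁻¹
          * ∑' k : ℕ, ((n + 1 + k : ℕ) : ℝ) * ‖V (n + 1) (n + 1 + k)‖)) := by ring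
  have h0 : Tendsto (fun lam : ℂ => lam.im⁻¹ * (β⁻¹ * ∑' n : ℕ,
      ((n : ℝ) + 1)⁻¹ * ∑' k : ℕ, ((n + 1 + k : ℕ) : ℝ) * ‖V (n + 1) (n + 1 + k)‖))
      (comap Complex.im atTop) (𝓝 0) := by
    simpa using tendsto_inv_im.mul_const (β⁻¹ * ∑' n : ℕ,
      ((n : ℝ) + 1)⁻¹ * ∑' k : ℕ, ((n + 1 + k : ℕ) : ℝ) * ‖V (n + 1) (n + 1 + k)‖)
  exact squeeze_zero' (Eventually.of_forall fun _ => norm_nonneg _) hb h0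

lemma GG1_tendsto (hC : Conv V) :
    Tendsto (fun lam : ℂ => DD1 V lam * (2 * Complex.I * lam)⁻¹)
      (comap Complex.im atTop) (𝓝 0) := by
  rw [tendsto_zero_iff_norm_tendsto_zero]
  have hb : ∀ᶠ lam : ℂ in comap Complex.im atTop,
      ‖DD1 V lam * (2 * Complex.I * lam)⁻¹‖ ≤ lam.im⁻¹ * (∑' n : ℕ,
        ((n : ℝ) + 1)⁻¹ * ∑' k : ℕ, ((n + 1 + k : ℕ) : ℝ) * ‖V (n + 1) (n + 1 + k)‖) := by
    filter_upwards [ev_pos] with lam hl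
    have h1 : DD1 V lam * (2 * Complex.I * lam)⁻¹
        = ∑' n : ℕ, (((n : ℂ) + 1) + 2 * lam)⁻¹ * dco V n * (2 * Complex.I * lam)⁻¹ := by
      rw [DD1, tsum_mul_right]
    rw [h1]
    refine tsum_of_norm_bounded (hC.2.hasSum.mul_left lam.im⁻¹) (fun n => ?_)
    rw [norm_mul, norm_mul]
    calc ‖(((n : ℂ) + 1) + 2 * lam)⁻¹‖ * ‖dco V n‖ * ‖(2 * Complex.I * lam)⁻¹‖
        = ‖(((n : ℂ) + 1) + 2 * lam)⁻¹‖ * ‖(2 * Complex.I * lam)⁻¹‖ * ‖dco V n‖ := by ring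
    _ ≤ (((n : ℝ) + 1)⁻¹ * lam.im⁻¹) * bb V n :=
        mul_le_mul (prod1 hl n) (norm_dco hC n) (norm_nonneg _) (by positivity)
    _ = lam.im⁻¹ * (((n : ℝ) + 1)⁻¹ * bb V n) := by ring
  have h0 : Tendsto (fun lam : ℂ => lam.im⁻¹ * (∑' n : ℕ,
      ((n : ℝ) + 1)⁻¹ * ∑' k : ℕ, ((n + 1 + k : ℕ) : ℝ) * ‖V (n + 1) (n + 1 + k)‖))
      (comap Complex.im atTop) (𝓝 0) := by
    simpa using tendsto_inv_im.mul_const (∑' n : ℕ,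
      ((n : ℝ) + 1)⁻¹ * ∑' k : ℕ, ((n + 1 + k : ℕ) : ℝ) * ‖V (n + 1) (n + 1 + k)‖)
  exact squeeze_zero' (Eventually.of_forall fun _ => norm_nonneg _) hb h0

lemma GG2_tendsto (hC : Conv V) {β : ℝ} (hβ : 0 < β) :
    Tendsto (fun lam : ℂ => DD2 V β lam * (2 * Complex.I * lam)⁻¹)
      (comap Complex.im atTop) (𝓝 0) := by
  rw [tendsto_zero_iff_norm_tendsto_zero]
  have hb : ∀ᶠ lam : ℂ in comap Complex.im atTop,
      ‖DD2 V β lam * (2 * Complex.I * lam)⁻¹‖ ≤ lam.im⁻¹ * (∑' n : ℕ,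
        ((n : ℝ) + 1)⁻¹ * ∑' k : ℕ, ((n + 1 + k : ℕ) : ℝ) * ‖V (n + 1) (n + 1 + k)‖) := by
    filter_upwards [ev_pos] with lam hl
    have h1 : DD2 V β lam * (2 * Complex.I * lam)⁻¹
        = ∑' n : ℕ, (((n : ℂ) + 1) - 2 * lam * (β : ℂ))⁻¹ * dco V n
          * (2 * Complex.I * lam)⁻¹ := by
      rw [DD2, tsum_mul_right]
    rw [h1]
    refine tsum_of_norm_bounded (hC.2.hasSum.mul_left lam.im⁻¹) (fun n => ?_)
    rw [norm_mul, norm_mul]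
    calc ‖(((n : ℂ) + 1) - 2 * lam * (β : ℂ))⁻¹‖ * ‖dco V n‖ * ‖(2 * Complex.I * lam)⁻¹‖
        = ‖(((n : ℂ) + 1) - 2 * lam * (β : ℂ))⁻¹‖ * ‖(2 * Complex.I * lam)⁻¹‖ * ‖dco V n‖ := by
          ring
    _ ≤ (((n : ℝ) + 1)⁻¹ * lam.im⁻¹) * bb V n :=
        mul_le_mul (prod2 hβ hl n) (norm_dco hC n) (norm_nonneg _) (by positivity)
    _ = lam.im⁻¹ * (((n : ℝ) + 1)⁻¹ * bb V n) := by ring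
  have h0 : Tendsto (fun lam : ℂ => lam.im⁻¹ * (∑' n : ℕ,
      ((n : ℝ) + 1)⁻¹ * ∑' k : ℕ, ((n + 1 + k : ℕ) : ℝ) * ‖V (n + 1) (n + 1 + k)‖))
      (comap Complex.im atTop) (𝓝 0) := by
    simpa using tendsto_inv_im.mul_const (∑' n : ℕ,
      ((n : ℝ) + 1)⁻¹ * ∑' k : ℕ, ((n + 1 + k : ℕ) : ℝ) * ‖V (n + 1) (n + 1 + k)‖)
  exact squeeze_zero' (Eventually.of_forall fun _ => norm_nonneg _) hb h0

end St13

theorem stmt13 (q : ℕ → ℂ) (V : ℕ → ℕ → ℂ)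
    (hq : Summable fun n : ℕ => ‖q (n + 1)‖ ^ 2)
    (hR : Recur q V) (hC : Conv V)
    (β : ℝ) (hβ : 0 < β) (hβ1 : β ≠ 1) :
    Tendsto (C12 V β) (comap Complex.im atTop) (𝓝 (-(((β : ℂ) + 1) / 2))) ∧
    (β : ℂ) = -2 * (-(((β : ℂ) + 1) / 2)) - 1 := by
  refine ⟨?_, by ring⟩
  have key : (C12 V β) =ᶠ[comap Complex.im atTop] fun lam =>
      -(((β : ℂ) + 1) / 2) * (St13.FF1 V lam * St13.FF2 V β lam)
        + St13.FF1 V lam * (St13.DD2 V β lam * (2 * Complex.I * lam)⁻¹)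
        - (St13.DD1 V lam * (2 * Complex.I * lam)⁻¹) * St13.FF2 V β lam :=
    St13.ev_pos.mono fun lam hl => St13.C12_eq hC hβ hl
  have hT := ((tendsto_const_nhds (x := -(((β : ℂ) + 1) / 2)) |>.mul
      ((St13.FF1_tendsto hC).mul (St13.FF2_tendsto hC hβ))).add
      ((St13.FF1_tendsto hC).mul (St13.GG2_tendsto hC hβ))).sub
      ((St13.GG1_tendsto hC).mul (St13.FF2_tendsto hC hβ))
  have hT' : Tendsto (fun lam : ℂ =>
      -(((β : ℂ) + 1) / 2) * (St13.FF1 V lam * St13.FF2 V β lam)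
        + St13.FF1 V lam * (St13.DD2 V β lam * (2 * Complex.I * lam)⁻¹)
        - (St13.DD1 V lam * (2 * Complex.I * lam)⁻¹) * St13.FF2 V β lam)
      (comap Complex.im atTop) (𝓝 (-(((β : ℂ) + 1) / 2))) := by
    simpa using hT
  exact hT'.congr' key.symm
end

section
/- The spectral data {C₁₂(λ), V_{nn}} uniquely determine β and the potential: let (q_n) and (q̃_n) be two square-summable sequences of complex numbers, β, β̃ ∈ (0,∞)∖{1}, and let (V_{nα}) and (Ṽ_{nα}) be corresponding coefficient systems satisfying the recurrence relations and the convergence condition, with C₁₂ and C̃₁₂ the corresponding functions built from (V,β) and (Ṽ,β̃) respectively. If C₁₂(λ) = C̃₁₂(λ) for all λ with Im λ > 0 and V_{nn} = Ṽ_{nn} for all n ≥ 1, then β = β̃ and q_n = q̃_n for all n ≥ 1. -/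
open Complex MeasureTheory Filter Topology

noncomputable def Mn (V : ℕ → ℕ → ℂ) (n : ℕ) : ℝ :=
  ∑' k : ℕ, ((n + 1 + k : ℕ) : ℝ) * ‖V (n + 1) (n + 1 + k)‖

noncomputable def gg (V : ℕ → ℕ → ℂ) (n : ℕ) (x : ℝ) : ℂ :=
  ∑' k : ℕ, V (n + 1) (n + 1 + k) * Complex.exp (Complex.I * ((n : ℂ) + 1 + (k : ℂ)) * (x : ℂ))

noncomputable def gg' (V : ℕ → ℕ → ℂ) (n : ℕ) (x : ℝ) : ℂ :=
  ∑' k : ℕ, V (n + 1) (n + 1 + k) *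
    (Complex.I * ((n : ℂ) + 1 + (k : ℂ)) * Complex.exp (Complex.I * ((n : ℂ) + 1 + (k : ℂ)) * (x : ℂ)))

section basic
variable {V : ℕ → ℕ → ℂ}

lemma sumM (hCv : Conv V) (n : ℕ) : Summable fun k : ℕ => ((n + 1 + k : ℕ) : ℝ) * ‖V (n + 1) (n + 1 + k)‖ :=
  hCv.1 (n + 1) (Nat.le_add_left 1 n)

lemma Mn_nonneg (n : ℕ) : 0 ≤ Mn V n :=
  tsum_nonneg fun k => mul_nonneg (Nat.cast_nonneg _) (norm_nonneg _)

lemma sumV (hCv : Conv V) (n : ℕ) : Summable fun k : ℕ => ‖V (n + 1) (n + 1 + k)‖ :=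
  (sumM hCv n).of_nonneg_of_le (fun k => norm_nonneg _)
    (fun k => le_mul_of_one_le_left (norm_nonneg _) (by exact_mod_cast Nat.one_le_iff_ne_zero.mpr (by omega)))

lemma norm_term (n k : ℕ) (x : ℝ) :
    ‖Complex.exp (Complex.I * ((n : ℂ) + 1 + (k : ℂ)) * (x : ℂ))‖ = 1 := by
  have h : Complex.I * ((n : ℂ) + 1 + (k : ℂ)) * (x : ℂ)
      = ((((n : ℝ) + 1 + (k : ℝ)) * x : ℝ) : ℂ) * Complex.I := by push_cast; ring
  rw [h, Complex.norm_exp_ofReal_mul_I]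

lemma norm_coef (n k : ℕ) : ‖Complex.I * ((n : ℂ) + 1 + (k : ℂ))‖ = ((n + 1 + k : ℕ) : ℝ) := by
  have h : Complex.I * ((n : ℂ) + 1 + (k : ℂ)) = (((n + 1 + k : ℕ) : ℂ)) * Complex.I := by
    push_cast; ring
  rw [h, norm_mul, Complex.norm_natCast, Complex.norm_I, mul_one]

lemma hasDerivAt_cexp_real (c : ℂ) (x : ℝ) :
    HasDerivAt (fun t : ℝ => Complex.exp (c * (t : ℂ))) (c * Complex.exp (c * (x : ℂ))) x := by
  have h : HasDerivAt (fun z : ℂ => Complex.exp (c * z)) (c * Complex.exp (c * (x : ℂ))) (x : ℂ) := by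
    have h2 := ((hasDerivAt_id (x : ℂ)).const_mul c).cexp
    exact h2.congr_deriv (by simp only [id, mul_one]; ring)
  exact h.comp_ofReal

lemma summable_g (hCv : Conv V) (n : ℕ) (x : ℝ) :
    Summable fun k : ℕ => V (n + 1) (n + 1 + k) *
      Complex.exp (Complex.I * ((n : ℂ) + 1 + (k : ℂ)) * (x : ℂ)) := by
  apply Summable.of_norm_bounded (sumV hCv n)
  intro k
  rw [norm_mul, norm_term, mul_one]

lemma hasDerivAt_g (hCv : Conv V) (n : ℕ) (x : ℝ) : HasDerivAt (gg V n) (gg' V n x) x := by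
  simp only [gg, gg']
  apply hasDerivAt_tsum (g := fun k (y : ℝ) => V (n + 1) (n + 1 + k) *
      Complex.exp (Complex.I * ((n : ℂ) + 1 + (k : ℂ)) * (y : ℂ)))
    (g' := fun k (y : ℝ) => V (n + 1) (n + 1 + k) *
      (Complex.I * ((n : ℂ) + 1 + (k : ℂ)) * Complex.exp (Complex.I * ((n : ℂ) + 1 + (k : ℂ)) * (y : ℂ)))) (u := fun k : ℕ => ((n + 1 + k : ℕ) : ℝ) * ‖V (n + 1) (n + 1 + k)‖)
    (sumM hCv n)
  · intro k y
    exact (hasDerivAt_cexp_real (Complex.I * ((n : ℂ) + 1 + (k : ℂ))) y).const_mul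
      (V (n + 1) (n + 1 + k))
  · intro k y
    rw [norm_mul, norm_mul, norm_term, mul_one, norm_coef, mul_comm]
  · exact summable_g hCv n 0

lemma norm_g_le (hCv : Conv V) (n : ℕ) (x : ℝ) : ‖gg V n x‖ ≤ Mn V n := by
  apply (norm_tsum_le_tsum_norm ((summable_g hCv n x).norm)).trans
  apply Summable.tsum_le_tsum _ ((summable_g hCv n x).norm) (sumM hCv n)
  intro k
  rw [norm_mul, norm_term, mul_one]
  exact le_mul_of_one_le_left (norm_nonneg _)
    (by exact_mod_cast Nat.one_le_iff_ne_zero.mpr (by omega))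

lemma summable_g' (hCv : Conv V) (n : ℕ) (x : ℝ) :
    Summable fun k : ℕ => V (n + 1) (n + 1 + k) *
      (Complex.I * ((n : ℂ) + 1 + (k : ℂ)) *
        Complex.exp (Complex.I * ((n : ℂ) + 1 + (k : ℂ)) * (x : ℂ))) := by
  apply Summable.of_norm_bounded (sumM hCv n)
  intro k
  rw [norm_mul, norm_mul, norm_term, mul_one, norm_coef, mul_comm]

lemma norm_g'_le (hCv : Conv V) (n : ℕ) (x : ℝ) : ‖gg' V n x‖ ≤ Mn V n := by
  apply (norm_tsum_le_tsum_norm ((summable_g' hCv n x).norm)).trans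
  apply le_of_eq
  apply tsum_congr
  intro k
  rw [norm_mul, norm_mul, norm_term, mul_one, norm_coef, mul_comm]

lemma hasDerivAt_G (hCv : Conv V) (c : ℕ → ℂ) (hc : ∀ n, ‖c n‖ ≤ ((n : ℝ) + 1)⁻¹) (x : ℝ) :
    HasDerivAt (fun t : ℝ => ∑' n : ℕ, c n * gg V n t) (∑' n : ℕ, c n * gg' V n x) x := by
  apply hasDerivAt_tsum (g := fun n (y : ℝ) => c n * gg V n y)
    (g' := fun n (y : ℝ) => c n * gg' V n y) (u := fun n : ℕ => ((n : ℝ) + 1)⁻¹ * Mn V n) hCv.2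
  · intro n y
    exact (hasDerivAt_g hCv n y).const_mul (c n)
  · intro n y
    rw [norm_mul]
    exact mul_le_mul (hc n) (norm_g'_le hCv n y) (norm_nonneg _) (by positivity)
  · apply Summable.of_norm_bounded hCv.2
    intro n
    rw [norm_mul]
    exact mul_le_mul (hc n) (norm_g_le hCv n 0) (norm_nonneg _) (by positivity)

noncomputable def Kk (V : ℕ → ℕ → ℂ) : ℝ := ∑' n : ℕ, ((n : ℝ) + 1)⁻¹ * Mn V n

lemma key_bound (hCv : Conv V) {c : ℕ → ℂ} (hc : ∀ n, ‖c n‖ ≤ ((n : ℝ) + 1)⁻¹) {w : ℕ → ℂ}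
    (hw : ∀ n, ‖w n‖ ≤ Mn V n) : ‖∑' n : ℕ, c n * w n‖ ≤ Kk V := by
  have hb : ∀ n, ‖c n * w n‖ ≤ ((n : ℝ) + 1)⁻¹ * Mn V n := fun n => by
    rw [norm_mul]
    exact mul_le_mul (hc n) (hw n) (norm_nonneg _) (by positivity)
  have hs : Summable fun n : ℕ => ‖c n * w n‖ :=
    hCv.2.of_nonneg_of_le (fun n => norm_nonneg _) hb
  exact (norm_tsum_le_tsum_norm hs).trans (Summable.tsum_le_tsum hb hs hCv.2)

lemma summable_cw (hCv : Conv V) {c : ℕ → ℂ} (hc : ∀ n, ‖c n‖ ≤ ((n : ℝ) + 1)⁻¹) {w : ℕ → ℂ}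
    (hw : ∀ n, ‖w n‖ ≤ Mn V n) : Summable fun n : ℕ => c n * w n := by
  apply Summable.of_norm_bounded hCv.2
  intro n
  rw [norm_mul]
  exact mul_le_mul (hc n) (hw n) (norm_nonneg _) (by positivity)

noncomputable def cc (n : ℕ) (t : ℝ) : ℂ := (((n : ℂ) + 1) + 2 * ((t : ℂ) * Complex.I))⁻¹

noncomputable def dd (β : ℝ) (n : ℕ) (t : ℝ) : ℂ :=
  (((n : ℂ) + 1) - 2 * ((t : ℂ) * Complex.I) * (β : ℂ))⁻¹

lemma norm_inv_le_of_le {z : ℂ} {r : ℝ} (hr : 0 < r) (h : r ≤ ‖z‖) : ‖z⁻¹‖ ≤ r⁻¹ := by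
  rw [norm_inv]
  exact inv_anti₀ hr h

lemma cc_bound1 (n : ℕ) (t : ℝ) : ‖cc n t‖ ≤ ((n : ℝ) + 1)⁻¹ := by
  apply norm_inv_le_of_le (by positivity)
  have hre : (((n : ℂ) + 1) + 2 * ((t : ℂ) * Complex.I)).re = (n : ℝ) + 1 := by simp
  calc (n : ℝ) + 1 = (((n : ℂ) + 1) + 2 * ((t : ℂ) * Complex.I)).re := hre.symm
    _ ≤ ‖(((n : ℂ) + 1) + 2 * ((t : ℂ) * Complex.I))‖ := by
        exact le_trans (le_abs_self _) (Complex.abs_re_le_norm _)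

lemma dd_bound1 (β : ℝ) (n : ℕ) (t : ℝ) : ‖dd β n t‖ ≤ ((n : ℝ) + 1)⁻¹ := by
  apply norm_inv_le_of_le (by positivity)
  have hre : (((n : ℂ) + 1) - 2 * ((t : ℂ) * Complex.I) * (β : ℂ)).re = (n : ℝ) + 1 := by simp
  calc (n : ℝ) + 1 = (((n : ℂ) + 1) - 2 * ((t : ℂ) * Complex.I) * (β : ℂ)).re := hre.symm
    _ ≤ ‖(((n : ℂ) + 1) - 2 * ((t : ℂ) * Complex.I) * (β : ℂ))‖ := by
        exact le_trans (le_abs_self _) (Complex.abs_re_le_norm _)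

lemma cc_bound2 (n : ℕ) {t : ℝ} (ht : 0 < t) : ‖cc n t‖ ≤ (2 * t)⁻¹ := by
  apply norm_inv_le_of_le (by positivity)
  have him : (((n : ℂ) + 1) + 2 * ((t : ℂ) * Complex.I)).im = 2 * t := by simp
  calc 2 * t = |(((n : ℂ) + 1) + 2 * ((t : ℂ) * Complex.I)).im| := by
        rw [him, abs_of_pos (by positivity)]
    _ ≤ ‖(((n : ℂ) + 1) + 2 * ((t : ℂ) * Complex.I))‖ := by
        exact Complex.abs_im_le_norm _

lemma dd_bound2 {β : ℝ} (hβ : 0 < β) (n : ℕ) {t : ℝ} (ht : 0 < t) :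
    ‖dd β n t‖ ≤ (2 * t * β)⁻¹ := by
  apply norm_inv_le_of_le (by positivity)
  have him : (((n : ℂ) + 1) - 2 * ((t : ℂ) * Complex.I) * (β : ℂ)).im = -(2 * t * β) := by
    simp
  calc 2 * t * β = |(((n : ℂ) + 1) - 2 * ((t : ℂ) * Complex.I) * (β : ℂ)).im| := by
        rw [him, abs_neg, abs_of_pos (by positivity)]
    _ ≤ ‖(((n : ℂ) + 1) - 2 * ((t : ℂ) * Complex.I) * (β : ℂ))‖ := by
        exact Complex.abs_im_le_norm _

lemma cc_tendsto (n : ℕ) : Tendsto (fun t : ℝ => cc n t) atTop (𝓝 0) := by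
  apply squeeze_zero_norm' (a := fun t : ℝ => (2 * t)⁻¹)
  · filter_upwards [eventually_gt_atTop 0] with t ht
    exact cc_bound2 n ht
  · exact Tendsto.inv_tendsto_atTop (tendsto_id.const_mul_atTop two_pos)

lemma dd_tendsto {β : ℝ} (hβ : 0 < β) (n : ℕ) : Tendsto (fun t : ℝ => dd β n t) atTop (𝓝 0) := by
  apply squeeze_zero_norm' (a := fun t : ℝ => (2 * t * β)⁻¹)
  · filter_upwards [eventually_gt_atTop 0] with t ht
    exact dd_bound2 hβ n ht
  · apply Tendsto.inv_tendsto_atTop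
    exact Tendsto.atTop_mul_const hβ (tendsto_id.const_mul_atTop two_pos)
end basic

section main
variable {V : ℕ → ℕ → ℂ}

lemma hF1 (hCv : Conv V) (t : ℝ) :
    HasDerivAt (fun s : ℝ => f1 V ((t : ℂ) * Complex.I) (s : ℂ))
      (Complex.I * ((t : ℂ) * Complex.I) * (1 + ∑' n : ℕ, cc n t * gg V n 0)
        + ∑' n : ℕ, cc n t * gg' V n 0) 0 := by
  have h := (hasDerivAt_cexp_real (Complex.I * ((t : ℂ) * Complex.I)) 0).mul
    ((hasDerivAt_const (0 : ℝ) (1 : ℂ)).add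
      (hasDerivAt_G hCv (fun n => cc n t) (fun n => cc_bound1 n t) 0))
  simpa only [Pi.mul_def, Pi.add_def, f1, gg, gg', cc, Complex.ofReal_zero, mul_zero, Complex.exp_zero, mul_one,
    one_mul, zero_add] using h

lemma hF2 (hCv : Conv V) (β : ℝ) (t : ℝ) :
    HasDerivAt (fun s : ℝ => f2 V β ((t : ℂ) * Complex.I) (s : ℂ))
      (-Complex.I * ((t : ℂ) * Complex.I) * (β : ℂ) * (1 + ∑' n : ℕ, dd β n t * gg V n 0)
        + ∑' n : ℕ, dd β n t * gg' V n 0) 0 := by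
  have h := (hasDerivAt_cexp_real (-Complex.I * ((t : ℂ) * Complex.I) * (β : ℂ)) 0).mul
    ((hasDerivAt_const (0 : ℝ) (1 : ℂ)).add
      (hasDerivAt_G hCv (fun n => dd β n t) (fun n => dd_bound1 β n t) 0))
  simpa only [Pi.mul_def, Pi.add_def, f2, gg, gg', dd, Complex.ofReal_zero, mul_zero, Complex.exp_zero, mul_one,
    one_mul, zero_add] using h

lemma e1 (t : ℝ) : f1 V ((t : ℂ) * Complex.I) 0 = 1 + ∑' n : ℕ, cc n t * gg V n 0 := by
  simp only [f1, gg, cc, Complex.ofReal_zero, mul_zero, Complex.exp_zero, one_mul, mul_one]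

lemma e2 (β : ℝ) (t : ℝ) :
    f2 V β ((t : ℂ) * Complex.I) 0 = 1 + ∑' n : ℕ, dd β n t * gg V n 0 := by
  simp only [f2, gg, dd, Complex.ofReal_zero, mul_zero, Complex.exp_zero, one_mul, mul_one]

lemma C12_formula (hCv : Conv V) (β : ℝ) {t : ℝ} (ht : 0 < t) :
    C12 V β ((t : ℂ) * Complex.I)
      = -(((β : ℂ) + 1) / 2) * ((1 + ∑' n : ℕ, cc n t * gg V n 0)
            * (1 + ∑' n : ℕ, dd β n t * gg V n 0))
        - ((1 + ∑' n : ℕ, cc n t * gg V n 0) * (∑' n : ℕ, dd β n t * gg' V n 0)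
            - (∑' n : ℕ, cc n t * gg' V n 0) * (1 + ∑' n : ℕ, dd β n t * gg V n 0))
            / (2 * (t : ℂ)) := by
  have ht0 : (t : ℂ) ≠ 0 := Complex.ofReal_ne_zero.mpr (ne_of_gt ht)
  rw [C12, (hF1 hCv t).deriv, (hF2 hCv β t).deriv, e1, e2]
  field_simp
  linear_combination (((∑' n : ℕ, cc n t * gg V n 0) * (∑' n : ℕ, dd β n t * gg' V n 0)
    + (∑' n : ℕ, dd β n t * gg' V n 0) - (∑' n : ℕ, dd β n t * gg V n 0) * (∑' n : ℕ, cc n t * gg' V n 0)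
    - (∑' n : ℕ, cc n t * gg' V n 0))) * Complex.I_mul_I

lemma tendsto_A (hCv : Conv V) : Tendsto (fun t : ℝ => ∑' n : ℕ, cc n t * gg V n 0) atTop (𝓝 0) := by
  have h := tendsto_tsum_of_dominated_convergence
    (f := fun (t : ℝ) (n : ℕ) => cc n t * gg V n 0) (g := fun _ : ℕ => (0 : ℂ))
    (bound := fun n : ℕ => ((n : ℝ) + 1)⁻¹ * Mn V n) hCv.2
    (fun n => by simpa using (cc_tendsto n).mul_const (gg V n 0))
    (Eventually.of_forall fun t n => by
      rw [norm_mul]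
      exact mul_le_mul (cc_bound1 n t) (norm_g_le hCv n 0) (norm_nonneg _) (by positivity))
  simpa using h

lemma tendsto_Cc (hCv : Conv V) {β : ℝ} (hβ : 0 < β) :
    Tendsto (fun t : ℝ => ∑' n : ℕ, dd β n t * gg V n 0) atTop (𝓝 0) := by
  have h := tendsto_tsum_of_dominated_convergence
    (f := fun (t : ℝ) (n : ℕ) => dd β n t * gg V n 0) (g := fun _ : ℕ => (0 : ℂ))
    (bound := fun n : ℕ => ((n : ℝ) + 1)⁻¹ * Mn V n) hCv.2
    (fun n => by simpa using (dd_tendsto hβ n).mul_const (gg V n 0))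
    (Eventually.of_forall fun t n => by
      rw [norm_mul]
      exact mul_le_mul (dd_bound1 β n t) (norm_g_le hCv n 0) (norm_nonneg _) (by positivity))
  simpa using h

lemma tendsto_C12 (hCv : Conv V) {β : ℝ} (hβ : 0 < β) :
    Tendsto (fun t : ℝ => C12 V β ((t : ℂ) * Complex.I)) atTop (𝓝 (-(((β : ℂ) + 1) / 2))) := by
  have hA := tendsto_A hCv
  have hCc := tendsto_Cc hCv hβ
  have hB : ∀ t : ℝ, ‖∑' n : ℕ, cc n t * gg' V n 0‖ ≤ Kk V := fun t =>
    key_bound hCv (fun n => cc_bound1 n t) (fun n => norm_g'_le hCv n 0)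
  have hD : ∀ t : ℝ, ‖∑' n : ℕ, dd β n t * gg' V n 0‖ ≤ Kk V := fun t =>
    key_bound hCv (fun n => dd_bound1 β n t) (fun n => norm_g'_le hCv n 0)
  have hK0 : 0 ≤ Kk V := le_trans (norm_nonneg _) (hB 0)
  -- the remainder term tends to 0
  have hrem : Tendsto (fun t : ℝ =>
      ((1 + ∑' n : ℕ, cc n t * gg V n 0) * (∑' n : ℕ, dd β n t * gg' V n 0)
        - (∑' n : ℕ, cc n t * gg' V n 0) * (1 + ∑' n : ℕ, dd β n t * gg V n 0))
        / (2 * (t : ℂ))) atTop (𝓝 0) := by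
    apply squeeze_zero_norm' (a := fun t : ℝ => (4 * Kk V) / (2 * t))
    · have h1 : ∀ᶠ t in atTop, ‖∑' n : ℕ, cc n t * gg V n 0‖ ≤ 1 := by
        have := hA.norm
        simp only [norm_zero] at this
        exact this.eventually_le_const one_pos
      have h2 : ∀ᶠ t in atTop, ‖∑' n : ℕ, dd β n t * gg V n 0‖ ≤ 1 := by
        have := hCc.norm
        simp only [norm_zero] at this
        exact this.eventually_le_const one_pos
      filter_upwards [h1, h2, eventually_gt_atTop (0 : ℝ)] with t h1 h2 ht
      have hden : ‖(2 * (t : ℂ))‖ = 2 * t := by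
        rw [show (2 * (t : ℂ)) = ((2 * t : ℝ) : ℂ) by push_cast; ring, Complex.norm_real,
          Real.norm_eq_abs, abs_of_pos (by positivity)]
      set At := ∑' n : ℕ, cc n t * gg V n 0
      set Ct := ∑' n : ℕ, dd β n t * gg V n 0
      set Bt := ∑' n : ℕ, cc n t * gg' V n 0
      set Dt := ∑' n : ℕ, dd β n t * gg' V n 0
      rw [norm_div, hden]
      have hn1 : ‖(1 : ℂ) + At‖ ≤ 2 := (norm_add_le _ _).trans (by rw [norm_one]; linarith)
      have hn2 : ‖(1 : ℂ) + Ct‖ ≤ 2 := (norm_add_le _ _).trans (by rw [norm_one]; linarith)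
      have hnum : ‖(1 + At) * Dt - Bt * (1 + Ct)‖ ≤ 4 * Kk V := by
        calc ‖(1 + At) * Dt - Bt * (1 + Ct)‖ ≤ ‖(1 + At) * Dt‖ + ‖Bt * (1 + Ct)‖ :=
              norm_sub_le _ _
          _ ≤ 2 * Kk V + Kk V * 2 := by
              rw [norm_mul, norm_mul]
              exact add_le_add (mul_le_mul hn1 (hD t) (norm_nonneg _) (by norm_num))
                (mul_le_mul (hB t) hn2 (norm_nonneg _) hK0)
          _ = 4 * Kk V := by ring
      exact (div_le_div_iff_of_pos_right (by positivity)).mpr hnum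
    · apply Tendsto.div_atTop tendsto_const_nhds
      exact tendsto_id.const_mul_atTop two_pos
  have hmain : Tendsto (fun t : ℝ =>
      -(((β : ℂ) + 1) / 2) * ((1 + ∑' n : ℕ, cc n t * gg V n 0)
          * (1 + ∑' n : ℕ, dd β n t * gg V n 0))
        - ((1 + ∑' n : ℕ, cc n t * gg V n 0) * (∑' n : ℕ, dd β n t * gg' V n 0)
            - (∑' n : ℕ, cc n t * gg' V n 0) * (1 + ∑' n : ℕ, dd β n t * gg V n 0))
            / (2 * (t : ℂ))) atTop (𝓝 (-(((β : ℂ) + 1) / 2))) := by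
    have hprod : Tendsto (fun t : ℝ =>
        (1 + ∑' n : ℕ, cc n t * gg V n 0) * (1 + ∑' n : ℕ, dd β n t * gg V n 0))
        atTop (𝓝 1) := by
      have := ((tendsto_const_nhds (x := (1:ℂ)) (f := atTop)).add hA).mul
        ((tendsto_const_nhds (x := (1:ℂ)) (f := atTop)).add hCc)
      simpa using this
    have := ((tendsto_const_nhds (x := -(((β : ℂ) + 1) / 2)) (f := atTop)).mul hprod).sub hrem
    simpa using this
  apply hmain.congr'
  filter_upwards [eventually_gt_atTop (0 : ℝ)] with t ht
  exact (C12_formula hCv β ht).symm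
end main

lemma alg_unique (q q' : ℕ → ℂ) (V V' : ℕ → ℕ → ℂ)
    (hR : Recur q V) (hR' : Recur q' V')
    (hVnn : ∀ n : ℕ, 1 ≤ n → V n n = V' n n) :
    ∀ α : ℕ, (∀ n, 1 ≤ n → n ≤ α → V n α = V' n α) ∧ (1 ≤ α → q α = q' α) := by
  intro α
  induction α using Nat.strong_induction_on with
  | _ α ih =>
    have hV : ∀ n, 1 ≤ n → n ≤ α → V n α = V' n α := by
      intro n hn hnα
      rcases eq_or_lt_of_le hnα with rfl | hlt
      · exact hVnn n hn
      · have h1 := hR.1 n α hn hlt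
        have h2 := hR'.1 n α hn hlt
        have hsum : ∑ s ∈ Finset.Icc n (α - 1), q (α - s) * V n s
            = ∑ s ∈ Finset.Icc n (α - 1), q' (α - s) * V' n s := by
          apply Finset.sum_congr rfl
          intro s hs
          rw [Finset.mem_Icc] at hs
          have hs1 : 1 ≤ s := le_trans hn hs.1
          have hsα : s < α := by omega
          have hq : q (α - s) = q' (α - s) := (ih (α - s) (by omega)).2 (by omega)
          have hv : V n s = V' n s := (ih s hsα).1 n hn hs.1
          rw [hq, hv]
        have hcoef : (α : ℂ) * ((α : ℂ) - (n : ℂ)) ≠ 0 := by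
          apply mul_ne_zero
          · exact_mod_cast Nat.cast_ne_zero.mpr (by omega)
          · rw [sub_ne_zero]
            exact_mod_cast fun h => (by omega : n ≠ α) (Nat.cast_injective h).symm
        have : (α : ℂ) * ((α : ℂ) - (n : ℂ)) * V n α
            = (α : ℂ) * ((α : ℂ) - (n : ℂ)) * V' n α := by
          have e1 : (α : ℂ) * ((α : ℂ) - (n : ℂ)) * V n α
              = -∑ s ∈ Finset.Icc n (α - 1), q (α - s) * V n s := by linear_combination h1
          have e2 : (α : ℂ) * ((α : ℂ) - (n : ℂ)) * V' n α
              = -∑ s ∈ Finset.Icc n (α - 1), q' (α - s) * V' n s := by linear_combination h2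
          rw [e1, e2, hsum]
        exact mul_left_cancel₀ hcoef this
    refine ⟨hV, fun hα => ?_⟩
    have h1 := hR.2 α hα
    have h2 := hR'.2 α hα
    have hsum : ∑ n ∈ Finset.Icc 1 α, V n α = ∑ n ∈ Finset.Icc 1 α, V' n α := by
      apply Finset.sum_congr rfl
      intro n hn
      rw [Finset.mem_Icc] at hn
      exact hV n hn.1 hn.2
    linear_combination h1 - h2 - (α : ℂ) * hsum

theorem stmt19 (q q' : ℕ → ℂ)
    (hq : Summable fun n : ℕ => ‖q (n + 1)‖ ^ 2)
    (hq' : Summable fun n : ℕ => ‖q' (n + 1)‖ ^ 2)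
    (β β' : ℝ) (hβ : 0 < β) (hβ1 : β ≠ 1) (hβ' : 0 < β') (hβ'1 : β' ≠ 1)
    (V V' : ℕ → ℕ → ℂ)
    (hR : Recur q V) (hCv : Conv V) (hR' : Recur q' V') (hCv' : Conv V')
    (hC12 : ∀ lam : ℂ, 0 < lam.im → C12 V β lam = C12 V' β' lam)
    (hVnn : ∀ n : ℕ, 1 ≤ n → V n n = V' n n) :
    β = β' ∧ ∀ n : ℕ, 1 ≤ n → q n = q' n := by
  constructor
  · have h1 := tendsto_C12 hCv hβ
    have h2 := tendsto_C12 hCv' hβ'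
    have heq : (fun t : ℝ => C12 V β ((t : ℂ) * Complex.I)) =ᶠ[atTop]
        (fun t : ℝ => C12 V' β' ((t : ℂ) * Complex.I)) := by
      filter_upwards [eventually_gt_atTop (0 : ℝ)] with t ht
      exact hC12 _ (by simpa using ht)
    have h3 := tendsto_nhds_unique (h1.congr' heq) h2
    have h4 : ((β : ℂ)) = ((β' : ℂ)) := by linear_combination (-2 : ℂ) * h3
    exact_mod_cast h4
  · intro n hn
    exact (alg_unique q q' V V' hR hR' hVnn n).2 hn
end
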